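/- Fix ω_m > 0, λ > 0, and a sampling interval T_s > 0. Then the following are equivalent: (a) for all f₁, f₂ that are ω_m-bandlimited with finite energy, if M_λ(f₁(n T_s)) = M_λ(f₂(n T_s)) for every n ∈ ℤ then f₁ = f₂; (b) T_s < π/ω_m, i.e. the sampling rate is strictly above the Nyquist rate. -/

import Mathlib

/-- `f : ℝ → ℝ` is `ωm`-bandlimited with finite energy: there is a square-integrable
`F : ℝ → ℂ` vanishing a.e. outside `[-ωm, ωm]` with
`f t = (1/(2π)) ∫ F ω e^{iωt} dω` for all `t`. -/
def IsBandlimited (ωm : ℝ) (f : ℝ → ℝ) : Prop :=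
  ∃ F : ℝ → ℂ,
    MeasureTheory.MemLp F 2 MeasureTheory.volume ∧
    (∀ᵐ ω : ℝ ∂MeasureTheory.volume, ω ∉ Set.Icc (-ωm) ωm → F ω = 0) ∧
    ∀ t : ℝ, (f t : ℂ) =
      (1 / (2 * Real.pi)) * ∫ ω : ℝ, F ω * Complex.exp (Complex.I * ω * t)

/-- The modulo operation `M_λ(a) = ((a + λ) mod 2λ) − λ`, where `x mod 2λ` is the
unique element of `[0, 2λ)` congruent to `x` modulo `2λ`. -/
noncomputable def modOp (lam a : ℝ) : ℝ :=
  Int.fract ((a + lam) / (2 * lam)) * (2 * lam) - lam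

/-- The normalized sinc function: `sinc x = sin (π x) / (π x)` for `x ≠ 0`, `sinc 0 = 1`. -/
noncomputable def sinc (x : ℝ) : ℝ :=
  if x = 0 then 1 else Real.sin (Real.pi * x) / (Real.pi * x)

/-!
Above the Nyquist rate the spectrum `F` of `f₁ - f₂` lies strictly inside the period
`(-π/Tₛ, π/Tₛ]`, and the samples `(f₁ - f₂)(-n Tₛ)` are, up to the factor `Tₛ`, the Fourier
coefficients of `F` on that period. Equal modulo samples differ by multiples of `2λ`, so each
coefficient is `0` or has size at least `2λ Tₛ`; being square-summable (Parseval), only finitely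
many are nonzero, and `F` agrees on its period with a trigonometric polynomial. That polynomial is
real-analytic and vanishes on the gap `(ωm, π/Tₛ]`, hence everywhere, so `F = 0` and `f₁ = f₂`.
At or below the Nyquist rate, `2λ sinc(t/Tₛ)` is `ωm`-bandlimited, and its samples `2λ, 0, 0, …`
agree modulo `2λ` with those of `0`.
-/

open MeasureTheory Set Complex Filter Topology

lemma modOp_eq_modOp_iff {lam : ℝ} (hlam : 0 < lam) {x y : ℝ} :
    modOp lam x = modOp lam y ↔ ∃ k : ℤ, x - y = 2 * lam * k := by
  have h2lam : 2 * lam ≠ 0 := by positivity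
  rw [modOp, modOp, sub_left_inj, mul_left_inj' h2lam, Int.fract_eq_fract]
  refine exists_congr fun k => ?_
  rw [← sub_div, add_sub_add_right_eq_sub, div_eq_iff h2lam, mul_comm]

lemma two_mul_le_abs_sub_of_modOp_eq {lam x y : ℝ} (hlam : 0 < lam)
    (h : modOp lam x = modOp lam y) (hxy : x ≠ y) : 2 * lam ≤ |x - y| := by
  obtain ⟨k, hk⟩ := (modOp_eq_modOp_iff hlam).1 h
  have hk0 : k ≠ 0 := by
    rintro rfl
    exact hxy (by simpa [sub_eq_zero] using hk)
  have hk1 : (1 : ℝ) ≤ |(k : ℝ)| := by exact_mod_cast Int.one_le_abs hk0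
  rw [hk, abs_mul, abs_of_pos (by positivity)]
  exact le_mul_of_one_le_right (by positivity) hk1

lemma sinc_intCast (n : ℤ) : sinc n = if n = 0 then 1 else 0 := by
  split_ifs with hn
  · simp [sinc, hn]
  · rw [sinc, if_neg (Int.cast_ne_zero.2 hn), mul_comm, Real.sin_int_mul_pi, zero_div]

lemma sinc_eq_real_sinc_pi_mul (x : ℝ) : sinc x = Real.sinc (Real.pi * x) := by
  simp [sinc, Real.sinc, Real.pi_ne_zero]

lemma integral_cexp_I_mul_mul_eq_sinc (a t : ℝ) :
    ∫ ω in -a..a, cexp (I * ω * t) = ((2 * a * Real.sinc (a * t) : ℝ) : ℂ) := by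
  rcases eq_or_ne t 0 with rfl | ht
  · simp [Real.sinc_zero]
    ring
  rcases eq_or_ne a 0 with rfl | ha
  · simp
  have hIt : I * t ≠ 0 := mul_ne_zero I_ne_zero (ofReal_ne_zero.2 ht)
  have ha' : (a : ℂ) ≠ 0 := ofReal_ne_zero.2 ha
  simp_rw [mul_right_comm I _ (t : ℂ)]
  rw [integral_exp_mul_complex hIt, Real.sinc_of_ne_zero (mul_ne_zero ha ht)]
  push_cast
  rw [Complex.sin]
  field_simp
  ring_nf
  rw [I_sq]
  ring

lemma MeasureTheory.MemLp.integrable_of_ae_notMem_Icc_eq_zero {F : ℝ → ℂ} {a b : ℝ}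
    (hF : MemLp F 2) (h : ∀ᵐ ω, ω ∉ Icc a b → F ω = 0) : Integrable F :=
  IntegrableOn.integrable_of_ae_notMem_eq_zero ((hF.restrict _).integrable one_le_two) h

lemma MeasureTheory.MemLp.integrable_mul_cexp {F : ℝ → ℂ} {a b : ℝ}
    (hF : MemLp F 2) (h : ∀ᵐ ω, ω ∉ Icc a b → F ω = 0) (t : ℝ) :
    Integrable fun ω : ℝ => F ω * cexp (I * ω * t) := by
  refine (hF.integrable_of_ae_notMem_Icc_eq_zero h).mul_bdd (c := 1) (by fun_prop)
    (ae_of_all _ fun ω => ?_)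
  rw [show I * ω * t = ((ω * t : ℝ) : ℂ) * I by push_cast; ring, norm_exp_ofReal_mul_I]

namespace IsBandlimited

lemma zero (ωm : ℝ) : IsBandlimited ωm 0 :=
  ⟨0, MemLp.zero, ae_of_all _ fun _ _ => rfl, fun _ => by simp⟩

lemma mono {ω₁ ω₂ : ℝ} {f : ℝ → ℝ} (hf : IsBandlimited ω₁ f) (h : ω₁ ≤ ω₂) :
    IsBandlimited ω₂ f := by
  obtain ⟨F, hF2, hFsupp, hFf⟩ := hf
  refine ⟨F, hF2, ?_, hFf⟩
  filter_upwards [hFsupp] with ω hω hω₂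
  exact hω fun ⟨h₁, h₂⟩ => hω₂ ⟨by linarith, by linarith⟩

lemma const_mul {ωm : ℝ} {f : ℝ → ℝ} (hf : IsBandlimited ωm f) (c : ℝ) :
    IsBandlimited ωm fun t => c * f t := by
  obtain ⟨F, hF2, hFsupp, hFf⟩ := hf
  refine ⟨fun ω => c * F ω, hF2.const_mul _, ?_, fun t => ?_⟩
  · filter_upwards [hFsupp] with ω hω hω'
    rw [hω hω', mul_zero]
  · rw [ofReal_mul, hFf t]
    simp_rw [mul_assoc, integral_const_mul]
    ring

lemma sub {ωm : ℝ} {f₁ f₂ : ℝ → ℝ} (hf₁ : IsBandlimited ωm f₁) (hf₂ : IsBandlimited ωm f₂) :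
    IsBandlimited ωm (f₁ - f₂) := by
  obtain ⟨F₁, hF₁2, hF₁supp, hF₁f⟩ := hf₁
  obtain ⟨F₂, hF₂2, hF₂supp, hF₂f⟩ := hf₂
  refine ⟨F₁ - F₂, hF₁2.sub hF₂2, ?_, fun t => ?_⟩
  · filter_upwards [hF₁supp, hF₂supp] with ω hω₁ hω₂ hω
    rw [Pi.sub_apply, hω₁ hω, hω₂ hω, sub_zero]
  · simp_rw [Pi.sub_apply, sub_mul]
    rw [integral_sub (hF₁2.integrable_mul_cexp hF₁supp t) (hF₂2.integrable_mul_cexp hF₂supp t),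
      mul_sub, ← hF₁f, ← hF₂f, ofReal_sub]

end IsBandlimited

lemma isBandlimited_sinc {Ts : ℝ} (hTs : 0 < Ts) :
    IsBandlimited (Real.pi / Ts) fun t => sinc (t / Ts) := by
  have ha : 0 < Real.pi / Ts := by positivity
  refine ⟨(Icc (-(Real.pi / Ts)) (Real.pi / Ts)).indicator fun _ => (Ts : ℂ),
    memLp_indicator_const 2 measurableSet_Icc _ (Or.inr measure_Icc_lt_top.ne),
    ae_of_all _ fun ω hω => indicator_of_notMem hω _, fun t => ?_⟩
  beta_reduce
  rw [← integral_congr_ae (ae_of_all _ fun ω => indicator_mul_left _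
      (fun _ => (Ts : ℂ)) (fun ω : ℝ => cexp (I * ω * t))), integral_indicator measurableSet_Icc,
    integral_Icc_eq_integral_Ioc, ← intervalIntegral.integral_of_le (neg_le_self ha.le),
    intervalIntegral.integral_const_mul, integral_cexp_I_mul_mul_eq_sinc, sinc_eq_real_sinc_pi_mul,
    mul_div_assoc', div_mul_eq_mul_div]
  have hTs' : (Ts : ℂ) ≠ 0 := ofReal_ne_zero.2 hTs.ne'
  push_cast
  field_simp

lemma Summable.finite_support_of_forall_le_norm {ι E : Type*} [NormedAddCommGroup E]
    {f : ι → E} (hf : Summable f) {δ : ℝ} (hδ : 0 < δ) (h : ∀ i, f i ≠ 0 → δ ≤ ‖f i‖) :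
    (Function.support f).Finite := by
  refine (eventually_cofinite.1 (hf.tendsto_cofinite_zero.eventually
    (Metric.ball_mem_nhds 0 hδ))).subset fun i hi => ?_
  simpa using h i hi

namespace AddCircle

variable {T : ℝ} [Fact (0 < T)]

lemma ae_restrict_Ioc_of_ae_haarAddCircle (t : ℝ) {p : AddCircle T → Prop}
    (h : ∀ᵐ x ∂haarAddCircle, p x) : ∀ᵐ x : ℝ ∂volume.restrict (Ioc t (t + T)), p x :=
  (AddCircle.measurePreserving_mk T t).quasiMeasurePreserving.ae <| by
    rw [volume_eq_smul_haarAddCircle]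
    exact Measure.ae_smul_measure h _

lemma summable_sq_fourierCoeff {H : AddCircle T → ℂ} (hH : MemLp H 2 haarAddCircle) :
    Summable fun n => ‖fourierCoeff H n‖ ^ 2 := by
  simpa only [fourierCoeff_congr_ae hH.coeFn_toLp] using
    (hasSum_sq_fourierCoeff hH.toLp).summable

lemma ae_eq_sum_fourier_of_fourierCoeff_eq_zero {H : AddCircle T → ℂ}
    (hH : MemLp H 2 haarAddCircle) {s : Finset ℤ} (hs : ∀ n ∉ s, fourierCoeff H n = 0) :
    H =ᵐ[haarAddCircle] fun x => ∑ n ∈ s, fourierCoeff H n * fourier n x := by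
  have hsum : hH.toLp =
      ContinuousMap.toLp 2 haarAddCircle ℂ (∑ n ∈ s, fourierCoeff H n • fourier n) := by
    simp only [map_sum, map_smul]
    refine (hasSum_fourier_series_L2 hH.toLp).unique ?_
    rw [fourierCoeff_congr_ae hH.coeFn_toLp]
    exact hasSum_sum_of_ne_finset_zero fun n hn => by rw [hs n hn, zero_smul]
  filter_upwards [hH.coeFn_toLp, ContinuousMap.coeFn_toLp (p := 2) (μ := haarAddCircle) (𝕜 := ℂ)
    (∑ n ∈ s, fourierCoeff H n • fourier n)] with x hx₁ hx₂
  rw [← hx₁, hsum, hx₂]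
  simp

end AddCircle

lemma analyticAt_sum_fourier_coe (T : ℝ) (s : Finset ℤ) (c : ℤ → ℂ) (x : ℝ) :
    AnalyticAt ℝ (fun x : ℝ => ∑ n ∈ s, c n * fourier n (x : AddCircle T)) x := by
  simp_rw [fourier_coe_apply]
  have h : AnalyticAt ℂ (fun z : ℂ => ∑ n ∈ s, c n * cexp (2 * Real.pi * I * n * z / T)) x := by
    fun_prop
  exact (h.restrictScalars (𝕜 := ℝ)).comp (ofRealCLM.analyticAt x)

lemma sum_fourier_coe_eq_zero_of_ae_restrict_Ioc {T u v : ℝ} (huv : u < v) {s : Finset ℤ}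
    {c : ℤ → ℂ}
    (h : ∀ᵐ x : ℝ ∂volume.restrict (Ioc u v), ∑ n ∈ s, c n * fourier n (x : AddCircle T) = 0)
    (x : ℝ) : ∑ n ∈ s, c n * fourier n (x : AddCircle T) = 0 := by
  set P : ℝ → ℂ := fun x => ∑ n ∈ s, c n * fourier n (x : AddCircle T)
  have hP : AnalyticOnNhd ℝ P univ := fun x _ => analyticAt_sum_fourier_coe T s c x
  have hIoo : EqOn P 0 (Ioo u v) :=
    Measure.eqOn_open_of_ae_eq (ae_restrict_of_ae_restrict_of_subset Ioo_subset_Ioc_self h)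
      isOpen_Ioo (hP.continuousOn.mono (subset_univ _)) continuousOn_const
  have hmid : P =ᶠ[𝓝 ((u + v) / 2)] 0 :=
    eventually_of_mem (Ioo_mem_nhds (by linarith) (by linarith)) hIoo
  exact hP.eqOn_zero_of_preconnected_of_eventuallyEq_zero isPreconnected_univ (mem_univ _) hmid
    (mem_univ x)

lemma ae_restrict_Ioc_eq_zero_of_finite_support_fourierCoeff {T : ℝ} [Fact (0 < T)] {t u v : ℝ}
    {F : ℝ → ℂ} (hF : MemLp F 2 (volume.restrict (Ioc t (t + T))))
    (hfin : (Function.support (fourierCoeff (AddCircle.liftIoc T t F))).Finite) (huv : u < v)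
    (hsub : Ioc u v ⊆ Ioc t (t + T)) (hzero : ∀ᵐ x ∂volume.restrict (Ioc u v), F x = 0) :
    ∀ᵐ x ∂volume.restrict (Ioc t (t + T)), F x = 0 := by
  set c := fourierCoeff (AddCircle.liftIoc T t F)
  have hseries := AddCircle.ae_eq_sum_fourier_of_fourierCoeff_eq_zero
    hF.memLp_liftIoc.haarAddCircle (s := hfin.toFinset) fun n hn => by simpa using hn
  have hF_eq : ∀ᵐ x ∂volume.restrict (Ioc t (t + T)),
      F x = ∑ n ∈ hfin.toFinset, c n * fourier n (x : AddCircle T) := by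
    filter_upwards [AddCircle.ae_restrict_Ioc_of_ae_haarAddCircle t hseries,
      ae_restrict_mem measurableSet_Ioc] with x hx hmem
    rwa [AddCircle.liftIoc_coe_apply hmem] at hx
  have hsum_zero := sum_fourier_coe_eq_zero_of_ae_restrict_Ioc huv <| by
    filter_upwards [ae_restrict_of_ae_restrict_of_subset hsub hF_eq, hzero] with x hx hx₀
    rw [← hx, hx₀]
  filter_upwards [hF_eq] with x hx
  rw [hx, hsum_zero x]

lemma fourierCoeff_liftIoc_eq_samples {ωm Ts : ℝ} (hTs : 0 < Ts) (hωm : ωm < Real.pi / Ts)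
    {F : ℝ → ℂ} {f : ℝ → ℝ} (hFsupp : ∀ᵐ ω, ω ∉ Icc (-ωm) ωm → F ω = 0)
    (hFf : ∀ t, (f t : ℂ) = 1 / (2 * Real.pi) * ∫ ω : ℝ, F ω * cexp (I * ω * t))
    [Fact (0 < 2 * (Real.pi / Ts))] (n : ℤ) :
    fourierCoeff (AddCircle.liftIoc (2 * (Real.pi / Ts)) (-(Real.pi / Ts)) F) n =
      Ts * f (-(n * Ts)) := by
  have ha : 0 < Real.pi / Ts := by positivity
  rw [fourierCoeff_eq_intervalIntegral _ _ (-(Real.pi / Ts)),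
    intervalIntegral.integral_of_le (by linarith),
    setIntegral_congr_fun measurableSet_Ioc fun x hx => by rw [AddCircle.liftIoc_coe_apply hx],
    setIntegral_eq_integral_of_ae_compl_eq_zero, hFf]
  · have hexp (x : ℝ) : fourier (-n) (x : AddCircle (2 * (Real.pi / Ts))) • F x =
        F x * cexp (I * x * ↑(-(n * Ts))) := by
      rw [fourier_coe_apply, smul_eq_mul, mul_comm]
      congr 2
      push_cast
      field_simp
    simp_rw [hexp, real_smul, ← mul_assoc]
    congr 1
    push_cast
    field_simp
  · filter_upwards [hFsupp] with x hx hxI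
    rw [hx fun h => hxI ⟨by linarith [h.1], by linarith [h.2]⟩, smul_zero]

theorem IsBandlimited.eq_zero_of_le_abs_samples {ωm Ts δ : ℝ} {f : ℝ → ℝ}
    (hf : IsBandlimited ωm f) (hTs : 0 < Ts) (hωm : ωm < Real.pi / Ts) (hδ : 0 < δ)
    (hsamp : ∀ n : ℤ, f (n * Ts) ≠ 0 → δ ≤ |f (n * Ts)|) : f = 0 := by
  obtain ⟨F, hF2, hFsupp, hFf⟩ := hf
  set a := Real.pi / Ts
  have ha : 0 < a := by positivity
  have : Fact (0 < 2 * a) := ⟨by positivity⟩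
  have hcoeff (n : ℤ) : fourierCoeff (AddCircle.liftIoc (2 * a) (-a) F) n = Ts * f (-(n * Ts)) :=
    fourierCoeff_liftIoc_eq_samples hTs hωm hFsupp hFf n
  have hperiod : -a + 2 * a = a := by ring
  have hF2' := hF2.restrict (Ioc (-a) (-a + 2 * a))
  have hfin : (Function.support (fourierCoeff (AddCircle.liftIoc (2 * a) (-a) F))).Finite := by
    have hsq := AddCircle.summable_sq_fourierCoeff hF2'.memLp_liftIoc.haarAddCircle
    refine (hsq.finite_support_of_forall_le_norm (δ := (Ts * δ) ^ 2) (by positivity)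
      fun n hn => ?_).subset fun n hn => by simpa using hn
    have h := hsamp (-n) (by simpa [hcoeff, hTs.ne'] using hn)
    rw [Int.cast_neg, neg_mul] at h
    simp only [hcoeff, norm_pow, norm_mul, norm_real, Real.norm_eq_abs, abs_of_pos hTs, abs_abs]
    gcongr
  have hF_Ioc := ae_restrict_Ioc_eq_zero_of_finite_support_fourierCoeff hF2' hfin
    (u := max ωm 0) (v := -a + 2 * a) (by rw [hperiod]; exact max_lt hωm ha)
    (Ioc_subset_Ioc_left (by linarith [le_max_right ωm 0])) <| by
      filter_upwards [ae_restrict_of_ae hFsupp, ae_restrict_mem measurableSet_Ioc] with x hx hmem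
      exact hx fun h => (h.2.trans_lt ((le_max_left _ _).trans_lt hmem.1)).false
  have hF0 : ∀ᵐ ω, F ω = 0 := by
    filter_upwards [ae_imp_of_ae_restrict hF_Ioc, hFsupp] with x hx hx'
    by_cases hxI : x ∈ Icc (-ωm) ωm
    · exact hx ⟨by linarith [hxI.1], by linarith [hxI.2]⟩
    · exact hx' hxI
  funext t
  have := hFf t
  rw [integral_eq_zero_of_ae (by filter_upwards [hF0] with ω hω; simp [hω]), mul_zero] at this
  exact_mod_cast this

theorem identifiability_iff_above_nyquist_modulo
    (ωm lam Ts : ℝ) (hωm : 0 < ωm) (hlam : 0 < lam) (hTs : 0 < Ts) :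
    (∀ f₁ f₂ : ℝ → ℝ, IsBandlimited ωm f₁ → IsBandlimited ωm f₂ →
      (∀ n : ℤ, modOp lam (f₁ (n * Ts)) = modOp lam (f₂ (n * Ts))) → f₁ = f₂)
    ↔ Ts < Real.pi / ωm := by
  rw [lt_div_iff₀ hωm, mul_comm, ← lt_div_iff₀ hTs]
  constructor
  · intro hid
    by_contra! hge
    set f := fun t => 2 * lam * sinc (t / Ts)
    have hf : IsBandlimited ωm f := ((isBandlimited_sinc hTs).const_mul _).mono hge
    have hsamp (n : ℤ) : modOp lam (f (n * Ts)) = modOp lam ((0 : ℝ → ℝ) (n * Ts)) := by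
      rw [modOp_eq_modOp_iff hlam]
      refine ⟨if n = 0 then 1 else 0, ?_⟩
      simp only [f, mul_div_cancel_right₀ _ hTs.ne', sinc_intCast, Pi.zero_apply, sub_zero]
      split_ifs <;> simp
    have h0 := congrFun (hid _ _ hf (IsBandlimited.zero ωm) hsamp) 0
    simp [f, sinc, hlam.ne'] at h0
  · intro hlt f₁ f₂ hf₁ hf₂ hsamp
    refine sub_eq_zero.1 <| (hf₁.sub hf₂).eq_zero_of_le_abs_samples hTs hlt
      (by positivity : 0 < 2 * lam) fun n hn => ?_
    exact two_mul_le_abs_sub_of_modOp_eq hlam (hsamp n) (sub_ne_zero.1 hn)
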